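/- arXiv:1402.1441 — 2 statements merged into one kernel-verified Lean document; each statement's English description precedes it below -/
import Mathlib

section
/- There exists w_* ≥ c_K (depending on ξ) such that for every c > 0 one has S(c) ∩ G(c) ≠ ∅ if and only if c ≥ w_*; moreover, S(w_*) ∩ G(w_*) consists of exactly one point. -/
open Real Set

noncomputable section

/-- χ(s) = μ s / (ν + s). -/
def chiF (μ ν s : ℝ) : ℝ := μ * s / (ν + s)

/-- The set S(c) of points (β, α) with β > -ν/d and
c ξ₁ α + c ξ₂ β − D α² + χ(dβ) ≥ 0. -/
def Sset (d D μ ν ξ1 ξ2 c : ℝ) : Set (ℝ × ℝ) :=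
  {p : ℝ × ℝ | -(ν / d) < p.1 ∧
    0 ≤ c * ξ1 * p.2 + c * ξ2 * p.1 - D * p.2 ^ 2 + chiF μ ν (d * p.1)}

/-- The set G(c) of points (β, α) with c ξ₁ α + c ξ₂ β − d(α² + β²) ≥ λ. -/
def Gset (d lam ξ1 ξ2 c : ℝ) : Set (ℝ × ℝ) :=
  {p : ℝ × ℝ | lam ≤ c * ξ1 * p.2 + c * ξ2 * p.1 - d * (p.2 ^ 2 + p.1 ^ 2)}

/-- w_*(ξ): the least c > 0 such that S(c) ∩ G(c) ≠ ∅. -/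
def wstar (d D μ ν lam ξ1 ξ2 : ℝ) : ℝ :=
  sInf {c : ℝ | 0 < c ∧ (Sset d D μ ν ξ1 ξ2 c ∩ Gset d lam ξ1 ξ2 c).Nonempty}

/-- w_*(θ) := w_*((sin|θ|, cos|θ|)). -/
def wtheta (d D μ ν lam θ : ℝ) : ℝ :=
  wstar d D μ ν lam (Real.sin |θ|) (Real.cos |θ|)

/-- Φ(s) = 2d + D(s² − 1) + 4d²μs/(2νc_K + c_K²s). -/
def PhiF (d D μ ν cK s : ℝ) : ℝ :=
  2 * d + D * (s ^ 2 - 1) + 4 * d ^ 2 * μ * s / (2 * ν * cK + cK ^ 2 * s)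

/-!
On `G(c)` the linear form `u = ξ₁α + ξ₂β` is positive, so both defining inequalities improve as
`c` grows and `S(c) ∩ G(c)` increases with `c`. For `c` in a bounded range these sets lie in one
compact box that stays away from the pole `β = -ν/d` of `χ(dβ)`, so a least admissible `c`
exists, as the minimum of `c` over a compact set; this is `w_*`. Cauchy–Schwarz and AM–GM give
`w_* ≥ 2√(dλ)`. At `w_*` every common point lies on the circle `∂G(w_*)`: otherwise a small
shift in the `β` direction makes the `S`-inequality strict as well, and then a slightly smaller `c`
still works. Since `χ` is concave, `S(c)` is midpoint convex, while `G(c)` is a disc; the midpoint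
of two distinct common points would thus lie in the interior of `G(w_*)`, so the common point is
unique.
-/

open Filter Topology

lemma chiF_eq_sub {μ ν s : ℝ} (h : ν + s ≠ 0) : chiF μ ν s = μ - μ * ν / (ν + s) := by
  rw [chiF, eq_sub_iff_add_eq, ← add_div, div_eq_iff h]
  ring

lemma chiF_strictMonoOn {μ ν : ℝ} (hμ : 0 < μ) (hν : 0 < ν) :
    StrictMonoOn (chiF μ ν) (Ioi (-ν)) := by
  intro s hs t ht hst
  have hs' : 0 < ν + s := by simp only [mem_Ioi] at hs; linarith
  rw [chiF_eq_sub hs'.ne', chiF_eq_sub (by linarith : ν + t ≠ 0)]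
  have := div_lt_div_of_pos_left (mul_pos hμ hν) hs' (by linarith : ν + s < ν + t)
  linarith

lemma chiF_add_chiF_le {μ ν s t : ℝ} (hμν : 0 ≤ μ * ν) (hs : 0 < ν + s) (ht : 0 < ν + t) :
    chiF μ ν s + chiF μ ν t ≤ 2 * chiF μ ν ((s + t) / 2) := by
  have hm : 0 < ν + (s + t) / 2 := by linarith
  rw [chiF_eq_sub hs.ne', chiF_eq_sub ht.ne', chiF_eq_sub hm.ne']
  -- `1/x + 1/y ≥ 4/(x + y)` for `x, y > 0`
  have key : 2 * (μ * ν / (ν + (s + t) / 2)) ≤ μ * ν / (ν + s) + μ * ν / (ν + t) := by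
    rw [div_add_div _ _ hs.ne' ht.ne', ← mul_div_assoc, div_le_div_iff₀ hm (by positivity)]
    nlinarith [mul_nonneg hμν (sq_nonneg (s - t))]
  linarith

lemma neg_div_le_of_neg_le_chiF {μ ν M s : ℝ} (hμ : 0 < μ) (hM : 0 ≤ M) (hs : 0 < ν + s)
    (h : -M ≤ chiF μ ν s) : -(M * ν) / (μ + M) ≤ s := by
  rw [chiF, le_div_iff₀ hs] at h
  rw [div_le_iff₀ (by positivity)]
  linarith

lemma neg_div_lt_iff_pos_add_mul {ν d x : ℝ} (hd : 0 < d) : -(ν / d) < x ↔ 0 < ν + d * x := by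
  rw [neg_lt_iff_pos_add, add_div' _ _ _ hd.ne', div_pos_iff_of_pos_right hd, mul_comm]
  ring_nf

section

variable {d D μ ν lam ξ1 ξ2 c : ℝ} {p q : ℝ × ℝ}

def sFun (d D μ ν ξ1 ξ2 c : ℝ) (p : ℝ × ℝ) : ℝ :=
  c * ξ1 * p.2 + c * ξ2 * p.1 - D * p.2 ^ 2 + chiF μ ν (d * p.1)

def gFun (d ξ1 ξ2 c : ℝ) (p : ℝ × ℝ) : ℝ :=
  c * ξ1 * p.2 + c * ξ2 * p.1 - d * (p.2 ^ 2 + p.1 ^ 2)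

lemma mem_Gset : p ∈ Gset d lam ξ1 ξ2 c ↔ lam ≤ gFun d ξ1 ξ2 c p :=
  Iff.rfl

lemma sq_dot_le_sq_add_sq (hunit : ξ1 ^ 2 + ξ2 ^ 2 = 1) (p : ℝ × ℝ) :
    (ξ1 * p.2 + ξ2 * p.1) ^ 2 ≤ p.2 ^ 2 + p.1 ^ 2 := by
  nlinarith [sq_nonneg (ξ1 * p.1 - ξ2 * p.2)]

lemma mul_dot_pos_of_mem_Gset (hd : 0 < d) (hlam : 0 < lam) (hp : p ∈ Gset d lam ξ1 ξ2 c) :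
    0 < c * (ξ1 * p.2 + ξ2 * p.1) := by
  rw [mem_Gset, gFun] at hp
  nlinarith [sq_nonneg p.1, sq_nonneg p.2]

lemma mul_dot_le_of_mem_Gset (hd : 0 < d) (hlam : 0 < lam) (hunit : ξ1 ^ 2 + ξ2 ^ 2 = 1)
    (hc : 0 ≤ c) (hp : p ∈ Gset d lam ξ1 ξ2 c) :
    d * (ξ1 * p.2 + ξ2 * p.1) ≤ c := by
  have hu := pos_of_mul_pos_right (mul_dot_pos_of_mem_Gset hd hlam hp) hc
  have hCS := sq_dot_le_sq_add_sq hunit p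
  rw [mem_Gset, gFun] at hp
  nlinarith

lemma sq_add_sq_le_of_mem_Gset (hd : 0 < d) (hlam : 0 < lam) (hunit : ξ1 ^ 2 + ξ2 ^ 2 = 1)
    (hc : 0 ≤ c) (hp : p ∈ Gset d lam ξ1 ξ2 c) :
    p.2 ^ 2 + p.1 ^ 2 ≤ (c / d) ^ 2 := by
  have hdu := mul_dot_le_of_mem_Gset hd hlam hunit hc hp
  rw [mem_Gset, gFun] at hp
  rw [div_pow, le_div_iff₀ (by positivity)]
  nlinarith

lemma two_sqrt_le_of_mem_Gset (hd : 0 < d) (hlam : 0 < lam) (hunit : ξ1 ^ 2 + ξ2 ^ 2 = 1)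
    (hc : 0 < c) (hp : p ∈ Gset d lam ξ1 ξ2 c) :
    2 * √(d * lam) ≤ c := by
  have hu := pos_of_mul_pos_right (mul_dot_pos_of_mem_Gset hd hlam hp) hc.le
  have hCS := sq_dot_le_sq_add_sq hunit p
  set u := ξ1 * p.2 + ξ2 * p.1
  have hs : √(d * lam) ^ 2 = d * lam := sq_sqrt (by positivity)
  rw [mem_Gset, gFun] at hp
  have hG : lam + d * u ^ 2 ≤ c * u := by nlinarith
  have hAMGM : d * (2 * √(d * lam) * u) ≤ d * (lam + d * u ^ 2) := by
    nlinarith [sq_nonneg (√(d * lam) - d * u)]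
  exact le_of_mul_le_mul_right ((le_of_mul_le_mul_left hAMGM hd).trans hG) hu

lemma Sset_inter_Gset_mono (hd : 0 < d) (hlam : 0 < lam) {c' : ℝ} (hc : 0 ≤ c) (hcc' : c ≤ c') :
    Sset d D μ ν ξ1 ξ2 c ∩ Gset d lam ξ1 ξ2 c ⊆ Sset d D μ ν ξ1 ξ2 c' ∩ Gset d lam ξ1 ξ2 c' := by
  rintro p ⟨⟨hβ, hS⟩, hG⟩
  have hu := pos_of_mul_pos_right (mul_dot_pos_of_mem_Gset hd hlam hG) hc
  have hle := mul_le_mul_of_nonneg_right hcc' hu.le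
  rw [mem_Gset, gFun] at hG
  exact ⟨⟨hβ, by nlinarith⟩, by rw [mem_Gset, gFun]; nlinarith⟩

end

section

variable {d D μ ν lam ξ1 ξ2 : ℝ}

lemma mk_xi_mem_Sset_inter_Gset (hd : 0 < d) (hD : 0 ≤ D) (hμ : 0 < μ) (hν : 0 < ν)
    (hlam : 0 < lam) (hξ2 : 0 ≤ ξ2) (hunit : ξ1 ^ 2 + ξ2 ^ 2 = 1) :
    (ξ2, ξ1) ∈ Sset d D μ ν ξ1 ξ2 (lam + d + D) ∩ Gset d lam ξ1 ξ2 (lam + d + D) := by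
  have hχ : 0 ≤ chiF μ ν (d * ξ2) := by unfold chiF; positivity
  refine ⟨⟨by simp only; linarith [div_pos hν hd], ?_⟩, ?_⟩
  · simp only
    nlinarith [sq_nonneg ξ2]
  · rw [mem_Gset, gFun]
    nlinarith

lemma exists_isCompact_Sset_inter_Gset_subset (hd : 0 < d) (hD : 0 ≤ D) (hμ : 0 < μ)
    (hν : 0 < ν) (hlam : 0 < lam) (hunit : ξ1 ^ 2 + ξ2 ^ 2 = 1) {C : ℝ} (hC : 0 ≤ C) :
    ∃ K : Set (ℝ × ℝ), IsCompact K ∧ K ⊆ {p | -(ν / d) < p.1} ∧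
      ∀ c ∈ Icc 0 C, Sset d D μ ν ξ1 ξ2 c ∩ Gset d lam ξ1 ξ2 c ⊆ K := by
  set R := C / d
  set M := C * R
  have hR : 0 ≤ R := by positivity
  have hM : 0 ≤ M := by positivity
  -- `χ(dβ) ≥ -M` on the sets, which keeps `β` away from the pole `-ν/d` of `χ(dβ)`
  set b := -(M * ν) / (μ + M)
  refine ⟨Icc (b / d) R ×ˢ Icc (-R) R, isCompact_Icc.prod isCompact_Icc,
    fun p hp => ?_, fun c ⟨hc0, hcC⟩ p ⟨⟨hβ, hS⟩, hG⟩ => ?_⟩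
  · have hb : -ν < b := by
      rw [lt_div_iff₀ (by positivity)]
      nlinarith
    have := (div_le_iff₀' hd).mp hp.1.1
    show -(ν / d) < p.1
    rw [neg_div_lt_iff_pos_add_mul hd]
    linarith
  have hu := pos_of_mul_pos_right (mul_dot_pos_of_mem_Gset hd hlam hG) hc0
  have huR : ξ1 * p.2 + ξ2 * p.1 ≤ R :=
    (le_div_iff₀' hd).mpr ((mul_dot_le_of_mem_Gset hd hlam hunit hc0 hG).trans hcC)
  have hcu : c * (ξ1 * p.2 + ξ2 * p.1) ≤ M := mul_le_mul hcC huR hu.le hC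
  have hχ : -M ≤ chiF μ ν (d * p.1) := by nlinarith [sq_nonneg p.2]
  have hβ' := neg_div_le_of_neg_le_chiF hμ hM ((neg_div_lt_iff_pos_add_mul hd).mp hβ) hχ
  have hsq : p.2 ^ 2 + p.1 ^ 2 ≤ R ^ 2 :=
    (sq_add_sq_le_of_mem_Gset hd hlam hunit hc0 hG).trans
      (pow_le_pow_left₀ (by positivity) (div_le_div_of_nonneg_right hcC hd.le) 2)
  have h1 := abs_le_of_sq_le_sq' (by nlinarith [sq_nonneg p.2] : p.1 ^ 2 ≤ R ^ 2) hR
  have h2 := abs_le_of_sq_le_sq' (by nlinarith [sq_nonneg p.1] : p.2 ^ 2 ≤ R ^ 2) hR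
  exact ⟨⟨(div_le_iff₀' hd).mpr hβ', h1.2⟩, h2⟩

end

lemma exists_isLeast_Sset_inter_Gset_nonempty {d D μ ν lam ξ1 ξ2 : ℝ} (hd : 0 < d) (hD : 0 ≤ D)
    (hμ : 0 < μ) (hν : 0 < ν) (hlam : 0 < lam) (hξ2 : 0 ≤ ξ2) (hunit : ξ1 ^ 2 + ξ2 ^ 2 = 1) :
    ∃ w, IsLeast {c | 0 < c ∧ (Sset d D μ ν ξ1 ξ2 c ∩ Gset d lam ξ1 ξ2 c).Nonempty} w := by
  set C := lam + d + D
  obtain ⟨K, hK, hKβ, hsub⟩ :=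
    exists_isCompact_Sset_inter_Gset_subset hd hD hμ hν hlam hunit (by positivity : 0 ≤ C)
  set B := Icc 0 C ×ˢ K
  have hB : IsCompact B := isCompact_Icc.prod hK
  have hS : ContinuousOn (fun x : ℝ × (ℝ × ℝ) => sFun d D μ ν ξ1 ξ2 x.1 x.2) B := by
    have hpole : ∀ x ∈ B, ν + d * x.2.1 ≠ 0 := fun x hx =>
      ((neg_div_lt_iff_pos_add_mul hd).mp (hKβ hx.2)).ne'
    unfold sFun chiF
    fun_prop (disch := assumption)
  have hG : Continuous fun x : ℝ × (ℝ × ℝ) => gFun d ξ1 ξ2 x.1 x.2 := by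
    unfold gFun
    fun_prop
  set T := (B ∩ (fun x => sFun d D μ ν ξ1 ξ2 x.1 x.2) ⁻¹' Ici 0) ∩
    (fun x => gFun d ξ1 ξ2 x.1 x.2) ⁻¹' Ici lam
  have hT : IsCompact T :=
    (hB.of_isClosed_subset (hS.preimage_isClosed_of_isClosed hB.isClosed isClosed_Ici)
      inter_subset_left).inter_right (isClosed_Ici.preimage hG)
  have hmemT : ∀ c ∈ Icc 0 C, ∀ p ∈ Sset d D μ ν ξ1 ξ2 c ∩ Gset d lam ξ1 ξ2 c, (c, p) ∈ T :=
    fun c hc p hp => ⟨⟨⟨hc, hsub c hc hp⟩, hp.1.2⟩, hp.2⟩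
  obtain ⟨x, ⟨⟨⟨hx0, hxK⟩, hxS⟩, hxG⟩, hmin⟩ := hT.exists_isMinOn
    ⟨_, hmemT C ⟨by positivity, le_rfl⟩ _
      (mk_xi_mem_Sset_inter_Gset hd hD hμ hν hlam hξ2 hunit)⟩
    continuous_fst.continuousOn
  refine ⟨x.1, ⟨?_, x.2, ⟨hKβ hxK, hxS⟩, hxG⟩, fun c ⟨hc, p, hp⟩ => ?_⟩
  · exact hx0.1.lt_of_ne
      (left_ne_zero_of_mul (mul_dot_pos_of_mem_Gset (p := x.2) hd hlam hxG).ne').symm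
  · rcases le_or_gt c C with hcC | hCc
    · exact hmin (hmemT c ⟨hc.le, hcC⟩ p hp)
    · exact hx0.2.trans hCc.le

section

variable {d D μ ν lam ξ1 ξ2 w : ℝ} {p q : ℝ × ℝ}

lemma exists_lt_sFun_of_lt_gFun (hd : 0 < d) (hμ : 0 < μ) (hν : 0 < ν) (hξ2 : 0 ≤ ξ2)
    (hw : 0 ≤ w) (hp : p ∈ Sset d D μ ν ξ1 ξ2 w) (hG : lam < gFun d ξ1 ξ2 w p) :
    ∃ q : ℝ × ℝ, -(ν / d) < q.1 ∧ 0 < sFun d D μ ν ξ1 ξ2 w q ∧ lam < gFun d ξ1 ξ2 w q := by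
  -- shifting `p` to the right strictly increases `χ(dβ)`, and small shifts stay in `G(w)`
  have hshift : Tendsto (fun t => gFun d ξ1 ξ2 w (p.1 + t, p.2)) (𝓝[>] 0)
      (𝓝 (gFun d ξ1 ξ2 w p)) := by
    have hcont : Continuous fun t => gFun d ξ1 ξ2 w (p.1 + t, p.2) := by
      unfold gFun
      fun_prop
    simpa using (hcont.tendsto 0).mono_left nhdsWithin_le_nhds
  obtain ⟨t, htG, ht⟩ := ((hshift.eventually_const_lt hG).and self_mem_nhdsWithin).exists
  obtain ⟨hβ, hS⟩ := hp
  have hpole := (neg_div_lt_iff_pos_add_mul hd).mp hβ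
  have hχ : chiF μ ν (d * p.1) < chiF μ ν (d * (p.1 + t)) :=
    chiF_strictMonoOn hμ hν (by simp only [mem_Ioi]; linarith)
      (by simp only [mem_Ioi]; nlinarith) (by nlinarith)
  refine ⟨(p.1 + t, p.2), by simp only; linarith, ?_, htG⟩
  unfold sFun
  nlinarith [mul_nonneg (mul_nonneg hw hξ2) ht.le]

lemma eventually_mem_Sset_inter_Gset (hβ : -(ν / d) < q.1) (hS : 0 < sFun d D μ ν ξ1 ξ2 w q)
    (hG : lam < gFun d ξ1 ξ2 w q) :
    ∀ᶠ c in 𝓝 w, q ∈ Sset d D μ ν ξ1 ξ2 c ∩ Gset d lam ξ1 ξ2 c := by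
  have hcS : Continuous fun c => sFun d D μ ν ξ1 ξ2 c q := by
    unfold sFun
    fun_prop
  have hcG : Continuous fun c => gFun d ξ1 ξ2 c q := by
    unfold gFun
    fun_prop
  filter_upwards [(hcS.tendsto w).eventually_const_lt hS, (hcG.tendsto w).eventually_const_lt hG]
    with c hSc hGc
  exact ⟨⟨hβ, hSc.le⟩, hGc.le⟩

lemma exists_lt_of_lt_gFun (hd : 0 < d) (hμ : 0 < μ) (hν : 0 < ν) (hξ2 : 0 ≤ ξ2)
    (hw : 0 < w) (hp : p ∈ Sset d D μ ν ξ1 ξ2 w) (hG : lam < gFun d ξ1 ξ2 w p) :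
    ∃ c ∈ Ioo 0 w, (Sset d D μ ν ξ1 ξ2 c ∩ Gset d lam ξ1 ξ2 c).Nonempty := by
  obtain ⟨q, hβ, hSq, hGq⟩ := exists_lt_sFun_of_lt_gFun hd hμ hν hξ2 hw.le hp hG
  obtain ⟨c, hq, hc⟩ := ((eventually_mem_Sset_inter_Gset hβ hSq hGq).filter_mono
    nhdsWithin_le_nhds |>.and (Ioo_mem_nhdsLT hw)).exists
  exact ⟨c, hc, q, hq⟩

lemma midpoint_mem_Sset (hd : 0 < d) (hD : 0 ≤ D) (hμ : 0 ≤ μ) (hν : 0 ≤ ν)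
    (hp : p ∈ Sset d D μ ν ξ1 ξ2 w) (hq : q ∈ Sset d D μ ν ξ1 ξ2 w) :
    ((p.1 + q.1) / 2, (p.2 + q.2) / 2) ∈ Sset d D μ ν ξ1 ξ2 w := by
  obtain ⟨hpβ, hpS⟩ := hp
  obtain ⟨hqβ, hqS⟩ := hq
  have hχ := chiF_add_chiF_le (mul_nonneg hμ hν) ((neg_div_lt_iff_pos_add_mul hd).mp hpβ)
    ((neg_div_lt_iff_pos_add_mul hd).mp hqβ)
  rw [show (d * p.1 + d * q.1) / 2 = d * ((p.1 + q.1) / 2) by ring] at hχ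
  refine ⟨by simp only; linarith, ?_⟩
  simp only
  nlinarith [mul_nonneg hD (sq_nonneg (p.2 - q.2))]

lemma lt_gFun_midpoint (hd : 0 < d) (hpq : p ≠ q) (hp : p ∈ Gset d lam ξ1 ξ2 w)
    (hq : q ∈ Gset d lam ξ1 ξ2 w) :
    lam < gFun d ξ1 ξ2 w ((p.1 + q.1) / 2, (p.2 + q.2) / 2) := by
  have hdist : 0 < (p.1 - q.1) ^ 2 + (p.2 - q.2) ^ 2 := by
    rcases not_and_or.mp (mt Prod.ext_iff.mpr hpq) with h | h
    · nlinarith [sq_pos_of_ne_zero (sub_ne_zero.mpr h), sq_nonneg (p.2 - q.2)]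
    · nlinarith [sq_pos_of_ne_zero (sub_ne_zero.mpr h), sq_nonneg (p.1 - q.1)]
  rw [mem_Gset, gFun] at hp hq
  rw [gFun]
  nlinarith [mul_pos hd hdist]

end

theorem statement14_general
    (d D μ ν lam : ℝ) (hd : 0 < d) (hD : 0 < D) (hμ : 0 < μ) (hν : 0 < ν)
    (hlam : 0 < lam)
    (ξ1 ξ2 : ℝ) (hξ2 : 0 ≤ ξ2) (hunit : ξ1 ^ 2 + ξ2 ^ 2 = 1) :
    ∃ w : ℝ, 2 * Real.sqrt (d * lam) ≤ w ∧
      (∀ c : ℝ, 0 < c →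
        ((Sset d D μ ν ξ1 ξ2 c ∩ Gset d lam ξ1 ξ2 c).Nonempty ↔ w ≤ c)) ∧
      (∃! p : ℝ × ℝ, p ∈ Sset d D μ ν ξ1 ξ2 w ∩ Gset d lam ξ1 ξ2 w) := by
  obtain ⟨w, ⟨hw, p, hp⟩, hleast⟩ :=
    exists_isLeast_Sset_inter_Gset_nonempty hd hD.le hμ hν hlam hξ2 hunit
  have hthreshold : ∀ c, 0 < c → ((Sset d D μ ν ξ1 ξ2 c ∩ Gset d lam ξ1 ξ2 c).Nonempty ↔ w ≤ c) :=
    fun c hc => ⟨fun hne => hleast ⟨hc, hne⟩,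
      fun hwc => ⟨p, Sset_inter_Gset_mono hd hlam hw.le hwc hp⟩⟩
  have hboundary : ∀ q ∈ Sset d D μ ν ξ1 ξ2 w, ¬ lam < gFun d ξ1 ξ2 w q := fun q hq hlt =>
    have ⟨c, ⟨hc, hcw⟩, hne⟩ := exists_lt_of_lt_gFun hd hμ hν hξ2 hw hq hlt
    hcw.not_ge ((hthreshold c hc).mp hne)
  refine ⟨w, two_sqrt_le_of_mem_Gset hd hlam hunit hw hp.2, hthreshold, p, hp, fun q hq => ?_⟩
  by_contra hqp
  exact hboundary _ (midpoint_mem_Sset hd hD.le hμ.le hν.le hq.1 hp.1)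
    (lt_gFun_midpoint hd hqp hq.2 hp.2)

theorem statement14
    (d D μ ν lam : ℝ) (hd : 0 < d) (hD : 0 < D) (hμ : 0 < μ) (hν : 0 < ν)
    (hlam : 0 < lam)
    (ξ1 ξ2 : ℝ) (hξ1 : 0 ≤ ξ1) (hξ2 : 0 ≤ ξ2) (hunit : ξ1 ^ 2 + ξ2 ^ 2 = 1) :
    ∃ w : ℝ, 2 * Real.sqrt (d * lam) ≤ w ∧
      (∀ c : ℝ, 0 < c →
        ((Sset d D μ ν ξ1 ξ2 c ∩ Gset d lam ξ1 ξ2 c).Nonempty ↔ w ≤ c)) ∧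
      (∃! p : ℝ × ℝ, p ∈ Sset d D μ ν ξ1 ξ2 w ∩ Gset d lam ξ1 ξ2 w) :=
  statement14_general d D μ ν lam hd hD hμ hν hlam ξ1 ξ2 hξ2 hunit
end
end

section
/- For every θ ∈ [0, π/2) and ξ = (sinθ, cosθ), the point (β, α) = (√(λ/d), 0) belongs to S(c) ∩ G(c) for c = c_K/cosθ; consequently w_*(θ) ≤ c_K/cosθ. -/
open Real Set

noncomputable section

/-
At c = c_K/ξ₂ and (β, α) = (√(λ/d), 0) one has c ξ₂ β = 2√(dλ)·√(λ/d) = 2λ and d β² = λ,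
so the point lies on the boundary of G(c). It lies in S(c) since α = 0 kills the D-term
and both 2λ and χ(dβ) are nonnegative. Hence c_K/ξ₂ competes in the infimum defining w_*.
-/

lemma chiF_nonneg {μ ν s : ℝ} (hμ : 0 ≤ μ) (hν : 0 ≤ ν) (hs : 0 ≤ s) : 0 ≤ chiF μ ν s :=
  div_nonneg (mul_nonneg hμ hs) (add_nonneg hν hs)

lemma sqrt_mul_mul_sqrt_div {d lam : ℝ} (hd : 0 < d) (hlam : 0 ≤ lam) :
    √(d * lam) * √(lam / d) = lam := by
  rw [← Real.sqrt_mul (by positivity), show d * lam * (lam / d) = lam ^ 2 by field_simp,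
    Real.sqrt_sq hlam]

lemma mul_sq_sqrt_div {d lam : ℝ} (hd : 0 < d) (hlam : 0 ≤ lam) : d * √(lam / d) ^ 2 = lam := by
  rw [Real.sq_sqrt (by positivity), mul_div_cancel₀ _ hd.ne']

section

variable {d lam ξ1 ξ2 : ℝ}

lemma kpp_speed_mul_sqrt (hd : 0 < d) (hlam : 0 ≤ lam) (hξ2 : 0 < ξ2) :
    2 * √(d * lam) / ξ2 * ξ2 * √(lam / d) = 2 * lam := by
  rw [div_mul_cancel₀ _ hξ2.ne', mul_assoc, sqrt_mul_mul_sqrt_div hd hlam]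

lemma sqrt_div_mem_Gset (hd : 0 < d) (hlam : 0 ≤ lam) (hξ2 : 0 < ξ2) :
    (√(lam / d), (0 : ℝ)) ∈ Gset d lam ξ1 ξ2 (2 * √(d * lam) / ξ2) := by
  have hβ := mul_sq_sqrt_div hd hlam
  have hc := kpp_speed_mul_sqrt hd hlam hξ2
  simp only [Gset, mem_ofPred_eq]
  linarith

lemma sqrt_div_mem_Sset {D μ ν : ℝ} (hd : 0 < d) (hlam : 0 ≤ lam) (hμ : 0 ≤ μ) (hν : 0 < ν)
    (hξ2 : 0 < ξ2) : (√(lam / d), (0 : ℝ)) ∈ Sset d D μ ν ξ1 ξ2 (2 * √(d * lam) / ξ2) := by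
  have hβ : 0 ≤ √(lam / d) := Real.sqrt_nonneg _
  have hχ : 0 ≤ chiF μ ν (d * √(lam / d)) := chiF_nonneg hμ hν.le (by positivity)
  have hc := kpp_speed_mul_sqrt hd hlam hξ2
  refine ⟨(neg_neg_of_pos (div_pos hν hd)).trans_le hβ, ?_⟩
  dsimp only
  linarith

end

lemma wstar_le_of_mem {d D μ ν lam ξ1 ξ2 c : ℝ} {p : ℝ × ℝ} (hc : 0 < c)
    (hp : p ∈ Sset d D μ ν ξ1 ξ2 c ∩ Gset d lam ξ1 ξ2 c) : wstar d D μ ν lam ξ1 ξ2 ≤ c :=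
  csInf_le ⟨0, fun _ hx => hx.1.le⟩ ⟨hc, p, hp⟩

theorem statement18_general
    (d D μ ν lam : ℝ) (hd : 0 < d) (hμ : 0 < μ) (hν : 0 < ν)
    (hlam : 0 < lam) :
    ∀ θ ∈ Ico (0:ℝ) (π/2),
      (Real.sqrt (lam / d), (0:ℝ)) ∈
        Sset d D μ ν (Real.sin θ) (Real.cos θ) (2 * Real.sqrt (d * lam) / Real.cos θ) ∩
        Gset d lam (Real.sin θ) (Real.cos θ) (2 * Real.sqrt (d * lam) / Real.cos θ) ∧
      wstar d D μ ν lam (Real.sin θ) (Real.cos θ) ≤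
        2 * Real.sqrt (d * lam) / Real.cos θ := by
  intro θ ⟨hθ0, hθ1⟩
  have hcos : 0 < Real.cos θ :=
    Real.cos_pos_of_mem_Ioo ⟨by linarith [Real.pi_pos], hθ1⟩
  refine ⟨?mem, wstar_le_of_mem (by positivity) ?mem⟩
  exact ⟨sqrt_div_mem_Sset hd hlam.le hμ.le hν hcos, sqrt_div_mem_Gset hd hlam.le hcos⟩

theorem statement18
    (d D μ ν lam : ℝ) (hd : 0 < d) (hD : 0 < D) (hμ : 0 < μ) (hν : 0 < ν)
    (hlam : 0 < lam) :
    ∀ θ ∈ Ico (0:ℝ) (π/2),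
      (Real.sqrt (lam / d), (0:ℝ)) ∈
        Sset d D μ ν (Real.sin θ) (Real.cos θ) (2 * Real.sqrt (d * lam) / Real.cos θ) ∩
        Gset d lam (Real.sin θ) (Real.cos θ) (2 * Real.sqrt (d * lam) / Real.cos θ) ∧
      wstar d D μ ν lam (Real.sin θ) (Real.cos θ) ≤
        2 * Real.sqrt (d * lam) / Real.cos θ :=
  statement18_general d D μ ν lam hd hμ hν hlam
end
end
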